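/- arXiv:2006.06423 — 3 statements merged into one kernel-verified Lean document; each statement's English description precedes it below -/
import Mathlib

section
/- Let R be a unital ring, d a positive integer, and A in M_d(R). Then A lies in the additive subgroup [M_d(R), M_d(R)] generated by commutators if and only if trace(A) lies in [R,R]. In particular, any matrix of trace zero is a sum of commutators. -/
/-- The additive subgroup of a ring generated by commutators. -/
def commSubgroup (S : Type*) [Ring S] : AddSubgroup S :=
  AddSubgroup.closure {z : S | ∃ x y : S, z = x * y - y * x}

/-!
Modulo sums of commutators every matrix is congruent to `single k k (trace A)`: an off-diagonal
unit `single i j a` is the commutator `[single i j a, single j j 1]`, and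
`single i i a - single k k a = [single i k a, single k i 1]`. Conversely the trace of a matrix
commutator `[x, y]` is `∑ i j, [x i j, y j i]`, and `single k k` carries commutators of `R` to
commutators of matrices, so `A` and `single k k (trace A)` lie in `[M_d(R), M_d(R)]` exactly when
`trace A ∈ [R, R]`.
-/

open Matrix

section General

variable {S T : Type*} [Ring S] [Ring T]

lemma commutator_mem_commSubgroup (x y : S) : x * y - y * x ∈ commSubgroup S :=
  AddSubgroup.subset_closure ⟨x, y, rfl⟩

lemma commSubgroup_le_comap (f : S →+ T) (hf : ∀ x y, f (x * y - y * x) ∈ commSubgroup T) :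
    commSubgroup S ≤ (commSubgroup T).comap f :=
  AddSubgroup.closure_le _ |>.mpr fun _ ⟨x, y, hz⟩ => hz ▸ hf x y

end General

namespace Matrix

variable {n R : Type*} [Fintype n] [Ring R]

lemma trace_commutator (x y : Matrix n n R) :
    trace (x * y - y * x) = ∑ i, ∑ j, (x i j * y j i - y j i * x i j) := by
  rw [trace_sub]
  simp only [trace, diag, mul_apply, Finset.sum_sub_distrib]
  rw [Finset.sum_comm (f := fun i j => y j i * x i j)]

variable [DecidableEq n]

lemma trace_mem_commSubgroup {A : Matrix n n R} (hA : A ∈ commSubgroup (Matrix n n R)) :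
    A.trace ∈ commSubgroup R :=
  commSubgroup_le_comap (traceAddMonoidHom n R) (fun x y => by
    simpa only [traceAddMonoidHom, AddMonoidHom.coe_mk, ZeroHom.coe_mk, trace_commutator] using
      AddSubgroup.sum_mem _ fun i _ => AddSubgroup.sum_mem _ fun j _ =>
        commutator_mem_commSubgroup (x i j) (y j i)) hA

lemma single_mem_commSubgroup (k : n) {a : R} (ha : a ∈ commSubgroup R) :
    single k k a ∈ commSubgroup (Matrix n n R) :=
  AddSubgroup.mem_comap.mp <| commSubgroup_le_comap (singleAddMonoidHom k k) (fun x y => by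
    simpa only [map_sub, singleAddMonoidHom_apply, single_mul_single_same] using
      commutator_mem_commSubgroup (single k k x) (single k k y)) ha

lemma single_mem_commSubgroup_of_ne {i j : n} (h : i ≠ j) (a : R) :
    single i j a ∈ commSubgroup (Matrix n n R) := by
  simpa [single_mul_single_of_ne (c := (1 : R)) j j i h.symm] using
    commutator_mem_commSubgroup (single i j a) (single j j 1)

lemma single_sub_single_mem_commSubgroup (i k : n) (a : R) :
    single i i a - single k k a ∈ commSubgroup (Matrix n n R) := by
  simpa using commutator_mem_commSubgroup (single i k a) (single k i 1)

lemma sub_single_trace_mem_commSubgroup (k : n) (A : Matrix n n R) :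
    A - single k k A.trace ∈ commSubgroup (Matrix n n R) := by
  induction A using Matrix.induction_on' with
  | h_zero => simp [zero_mem]
  | h_add p q hp hq =>
    rw [trace_add, single_add, add_sub_add_comm]
    exact add_mem hp hq
  | h_std_basis i j a =>
    obtain rfl | hij := eq_or_ne i j
    · simpa only [trace_single_eq_same] using single_sub_single_mem_commSubgroup i k a
    · simpa only [trace_single_eq_of_ne i j a hij, single_zero, sub_zero] using
        single_mem_commSubgroup_of_ne hij a

lemma mem_commSubgroup_iff_trace_mem [Nonempty n] {A : Matrix n n R} :
    A ∈ commSubgroup (Matrix n n R) ↔ A.trace ∈ commSubgroup R := by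
  refine ⟨trace_mem_commSubgroup, fun h => ?_⟩
  obtain ⟨k⟩ := ‹Nonempty n›
  simpa using add_mem (sub_single_trace_mem_commSubgroup k A) (single_mem_commSubgroup k h)

end Matrix

/-- A `d × d` matrix over a unital ring `R` is a sum of commutators iff its trace
is a sum of commutators in `R`; in particular every trace-zero matrix is a sum of
commutators. -/
theorem stmt_1 (R : Type*) [Ring R] (d : ℕ) (hd : 0 < d)
    (A : Matrix (Fin d) (Fin d) R) :
    (A ∈ commSubgroup (Matrix (Fin d) (Fin d) R) ↔ A.trace ∈ commSubgroup R) ∧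
      (A.trace = 0 → A ∈ commSubgroup (Matrix (Fin d) (Fin d) R)) := by
  have : Nonempty (Fin d) := ⟨⟨0, hd⟩⟩
  refine ⟨mem_commSubgroup_iff_trace_mem, fun h => ?_⟩
  rw [mem_commSubgroup_iff_trace_mem, h]
  exact zero_mem _
end

section
/- Any d×d matrix over a unital ring R with trace zero is a sum of commutators in M_d(R). -/
/-!
Off-diagonal matrix units are commutators, `E_ij a = [E_ii a, E_ij 1]`, and so are the
differences `E_ii a - E_jj a = [E_ij a, E_ji 1]`. Hence, for any index `k`, every matrix `A` is
congruent to `E_kk (trace A)` modulo the additive subgroup generated by commutators.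
-/

namespace Matrix

variable {n R : Type*} [Fintype n] [Ring R]

variable (n R) in
def commutatorAddSubgroup : AddSubgroup (Matrix n n R) :=
  AddSubgroup.closure {Z | ∃ X Y, Z = X * Y - Y * X}

theorem mul_sub_mul_mem_commutatorAddSubgroup (X Y : Matrix n n R) :
    X * Y - Y * X ∈ commutatorAddSubgroup n R :=
  AddSubgroup.subset_closure ⟨X, Y, rfl⟩

variable [DecidableEq n]

theorem single_mem_commutatorAddSubgroup {i j : n} (hij : i ≠ j) (a : R) :
    single i j a ∈ commutatorAddSubgroup n R := by
  have h := mul_sub_mul_mem_commutatorAddSubgroup (single i i a) (single i j (1 : R))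
  rwa [single_mul_single_same, single_mul_single_of_ne (h := hij.symm), mul_one, sub_zero] at h

theorem single_sub_single_mem_commutatorAddSubgroup (i j : n) (a : R) :
    single i i a - single j j a ∈ commutatorAddSubgroup n R := by
  simpa using mul_sub_mul_mem_commutatorAddSubgroup (single i j a) (single j i (1 : R))

theorem sub_single_trace_mem_commutatorAddSubgroup (k : n) (A : Matrix n n R) :
    A - single k k A.trace ∈ commutatorAddSubgroup n R := by
  induction A using Matrix.induction_on' with
  | h_zero => simp
  | h_add A B hA hB =>
    rw [trace_add, single_add, ← sub_add_sub_comm]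
    exact add_mem hA hB
  | h_std_basis i j a =>
    obtain rfl | hij := eq_or_ne i j
    · rw [trace_single_eq_same]
      exact single_sub_single_mem_commutatorAddSubgroup i k a
    · rw [trace_single_eq_of_ne i j a hij, single_zero, sub_zero]
      exact single_mem_commutatorAddSubgroup hij a

theorem mem_commutatorAddSubgroup_of_trace_eq_zero {A : Matrix n n R} (hA : A.trace = 0) :
    A ∈ commutatorAddSubgroup n R := by
  rcases isEmpty_or_nonempty n with _ | ⟨⟨k⟩⟩
  · exact Subsingleton.elim A 0 ▸ zero_mem _
  · simpa [hA] using sub_single_trace_mem_commutatorAddSubgroup k A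

end Matrix

/-- Any `d × d` matrix over a unital ring `R` with trace zero is a sum of
commutators in `M_d(R)`. -/
theorem stmt_2 (R : Type*) [Ring R] (d : ℕ) (A : Matrix (Fin d) (Fin d) R)
    (hA : A.trace = 0) :
    A ∈ AddSubgroup.closure
      {Z : Matrix (Fin d) (Fin d) R | ∃ X Y, Z = X * Y - Y * X} :=
  Matrix.mem_commutatorAddSubgroup_of_trace_eq_zero hA
end

section
/- A Lie algebra L over a field K is simple as a Lie ring (i.e., [L,L] ≠ 0 and the only additive subgroups I of L with [L,I] ⊆ I are 0 and L) if and only if L is simple as a Lie K-algebra (i.e., [L,L] ≠ 0 and the only K-subspaces I of L with [L,I] ⊆ I are 0 and L). -/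
/-- A Lie algebra `L` over a field `K` is simple as a Lie ring iff it is simple
as a Lie `K`-algebra. -/
theorem stmt_4 (K : Type*) [Field K] (L : Type*) [LieRing L] [LieAlgebra K L] :
    ((∃ x y : L, ⁅x, y⁆ ≠ 0) ∧
        ∀ I : AddSubgroup L, (∀ x : L, ∀ y ∈ I, ⁅x, y⁆ ∈ I) → I = ⊥ ∨ I = ⊤) ↔
      ((∃ x y : L, ⁅x, y⁆ ≠ 0) ∧
        ∀ I : Submodule K L, (∀ x : L, ∀ y ∈ I, ⁅x, y⁆ ∈ I) → I = ⊥ ∨ I = ⊤) := by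
  constructor
  · rintro ⟨hne, h⟩
    refine ⟨hne, fun I hI => ?_⟩
    rcases h I.toAddSubgroup hI with h' | h'
    · left; ext x
      simpa using AddSubgroup.ext_iff.mp h' x
    · right; ext x
      simpa using AddSubgroup.ext_iff.mp h' x
  · rintro ⟨hne, h⟩
    refine ⟨hne, fun I hI => ?_⟩
    -- the scalar-saturated part of I
    set J : Submodule K L :=
      { carrier := {x | ∀ c : K, c • x ∈ I}
        add_mem' := fun {a b} ha hb c => by
          rw [smul_add]; exact I.add_mem (ha c) (hb c)
        zero_mem' := fun c => by simpa using I.zero_mem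
        smul_mem' := fun c x hx d => by
          rw [smul_smul]; exact hx (d * c) } with hJdef
    have hJmem : ∀ x : L, x ∈ J ↔ ∀ c : K, c • x ∈ I := fun x => Iff.rfl
    have hJI : ∀ x ∈ J, x ∈ I := fun x hx => by simpa using (hJmem x).mp hx 1
    have hbr : ∀ x : L, ∀ y ∈ I, ⁅x, y⁆ ∈ J := by
      intro x y hy
      rw [hJmem]
      intro c
      rw [← smul_lie]
      exact hI (c • x) y hy
    have hJideal : ∀ x : L, ∀ y ∈ J, ⁅x, y⁆ ∈ J :=
      fun x y hy => hbr x y (hJI y hy)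
    rcases h J hJideal with hJ | hJ
    · -- J = ⊥ : then I is contained in the center, which is ⊥
      set C : Submodule K L :=
        { carrier := {x | ∀ y : L, ⁅y, x⁆ = 0}
          add_mem' := fun {a b} ha hb y => by rw [lie_add, ha y, hb y, add_zero]
          zero_mem' := fun y => lie_zero y
          smul_mem' := fun c x hx y => by rw [lie_smul, hx y, smul_zero] } with hCdef
      have hCideal : ∀ x : L, ∀ y ∈ C, ⁅x, y⁆ ∈ C := by
        intro x y hy z
        show ⁅z, ⁅x, y⁆⁆ = 0
        have : ⁅x, y⁆ = 0 := hy x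
        rw [this, lie_zero]
      rcases h C hCideal with hC | hC
      · left
        ext x
        simp only [AddSubgroup.mem_bot]
        constructor
        · intro hx
          have hxC : x ∈ C := by
            intro y
            have : ⁅y, x⁆ ∈ J := hbr y x hx
            rw [hJ] at this
            simpa using this
          rw [hC] at hxC
          simpa using hxC
        · rintro rfl; exact I.zero_mem
      · exfalso
        obtain ⟨x, y, hxy⟩ := hne
        have : y ∈ C := hC ▸ Submodule.mem_top
        exact hxy (this x)
    · -- J = ⊤ : then I = ⊤
      right
      ext x
      simp only [AddSubgroup.mem_top, iff_true]
      exact hJI x (hJ ▸ Submodule.mem_top)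
end
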